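/- Let H = K_{n,n} − M be the complete bipartite graph on parts U, V of size n with the perfect matching M = {u_i v_i : 1 ≤ i ≤ n} removed. The number of proper partitions of H into exactly k independent sets equals the sum over s = 0 to n of C(n,s) times the sum over j of S(s,j)·S(s, k − n + s − j), where the inner sum is 0 when k − n + s < 0. -/

import Mathlib

/-- Stirling numbers of the second kind. -/
def stirling : ℕ → ℕ → ℕ
  | 0, 0 => 1
  | 0, _ + 1 => 0
  | _ + 1, 0 => 0
  | n + 1, k + 1 => (k + 1) * stirling n (k + 1) + stirling n k

/-- The complete bipartite graph `K_{n,n}` with a perfect matching removed: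
`uᵢ` (i.e. `Sum.inl i`) is adjacent to `vⱼ` (i.e. `Sum.inr j`) iff `i ≠ j`. -/
def bipartiteMinusMatching (n : ℕ) : SimpleGraph (Fin n ⊕ Fin n) :=
  SimpleGraph.fromRel (fun x y =>
    match x, y with
    | Sum.inl i, Sum.inr j => i ≠ j
    | _, _ => False)

/-!
The independent sets of `H` are the subsets of `U`, the subsets of `V` and the pairs `{uᵢ, vᵢ}`.
Hence a proper partition consists of the pairs `{uᵢ, vᵢ}` for `i` outside a set `S` of indices,
together with an arbitrary partition of `{uᵢ | i ∈ S}` and an arbitrary partition of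
`{vᵢ | i ∈ S}`; since there are `n - |S|` pairs, the two partitions have `k - n + |S|` parts in
total. Counting partitions of an `s`-set into `j` parts by `S(s, j)` (the insertion recurrence
of the Stirling numbers) and summing over `S` gives the formula.
-/

open Finset

lemma Finset.image_erase_eq_self {α : Type*} [DecidableEq α] {X : Finset (Finset α)} {a : α}
    (h : ∀ p ∈ X, a ∉ p) : X.image (·.erase a) = X :=
  (image_congr fun p hp => erase_eq_of_notMem (h p hp)).trans image_id

lemma Nat.card_subtype_prod_add_eq {X Y : Type*} [Fintype X] [Fintype Y] (f : X → ℕ)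
    (g : Y → ℕ) (m : ℕ) : Nat.card {x : X × Y // f x.1 + g x.2 = m} =
      ∑ ij ∈ antidiagonal m, Nat.card {x // f x = ij.1} * Nat.card {y // g y = ij.2} := by
  classical
  simp only [Nat.card_eq_fintype_card, Fintype.card_subtype]
  rw [card_eq_sum_card_fiberwise (f := fun x => (f x.1, g x.2)) (t := antidiagonal m)
    fun x hx => by simpa [HasAntidiagonal.mem_antidiagonal] using hx]
  refine sum_congr rfl fun ij hij => ?_
  rw [filter_filter, ← card_product, ← filter_product, univ_product_univ]
  congr 1
  refine filter_congr fun x _ => ?_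
  rw [HasAntidiagonal.mem_antidiagonal] at hij
  constructor
  · rintro ⟨-, rfl⟩; exact ⟨rfl, rfl⟩
  · rintro ⟨h1, h2⟩; exact ⟨by rw [h1, h2, hij], Prod.ext h1 h2⟩

namespace Finpartition

variable {α : Type*} [DecidableEq α] {s : Finset α} {a : α}

def insertInto (Q : Finpartition s) (ha : a ∉ s) (t : Finset α) (ht : t ∈ insert ∅ Q.parts) :
    Finpartition (insert a s) where
  parts := insert (insert a t) (Q.parts.erase t)
  supIndep := by
    rw [supIndep_iff_pairwiseDisjoint, coe_insert]
    refine (Q.disjoint.subset (by simp)).insert fun u hu _ => ?_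
    have hu := mem_erase.1 hu
    refine disjoint_insert_left.2 ⟨fun hau => ha (Q.le hu.2 hau), ?_⟩
    rcases mem_insert.1 ht with rfl | ht
    · exact disjoint_empty_left u
    · exact Q.disjoint ht hu.2 (Ne.symm hu.1)
  sup_parts := by
    have hts : t ∪ (Q.parts.erase t).sup id = s := by
      rcases mem_insert.1 ht with rfl | ht
      · rw [erase_eq_of_notMem Q.empty_notMem_parts, Q.sup_parts, empty_union]
      · conv_rhs => rw [← Q.sup_parts, ← insert_erase ht, sup_insert]
        rfl
    rw [sup_insert, id_eq, sup_eq_union, insert_union, hts]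
  bot_notMem h := by
    rcases mem_insert.1 h with h | h
    · exact insert_ne_empty a t h.symm
    · exact Q.bot_notMem (mem_of_mem_erase h)

lemma insertInto_parts (Q : Finpartition s) (ha : a ∉ s) (t : Finset α)
    (ht : t ∈ insert ∅ Q.parts) :
    (Q.insertInto ha t ht).parts = insert (insert a t) (Q.parts.erase t) := rfl

lemma card_insertInto (Q : Finpartition s) (ha : a ∉ s) (t : Finset α)
    (ht : t ∈ insert ∅ Q.parts) :
    #(Q.insertInto ha t ht).parts = #Q.parts + if t = ∅ then 1 else 0 := by
  rw [insertInto_parts,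
    card_insert_of_notMem fun h => ha (Q.le (mem_of_mem_erase h) (mem_insert_self a t))]
  split_ifs with h
  · rw [h, erase_eq_of_notMem Q.empty_notMem_parts]
  · rw [card_erase_of_mem ((mem_insert.1 ht).resolve_left h)]
    have := card_pos.2 ⟨t, (mem_insert.1 ht).resolve_left h⟩
    omega

def eraseElem (P : Finpartition (insert a s)) (ha : a ∉ s) : Finpartition s :=
  (P.avoid {a}).copy (by rw [sdiff_singleton_eq_erase, erase_insert ha])

lemma eraseElem_parts (P : Finpartition (insert a s)) (ha : a ∉ s) :
    (P.eraseElem ha).parts = (P.parts.image (·.erase a)).erase ∅ := by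
  simp only [eraseElem, copy_parts, avoid, ofErase_parts, sdiff_singleton_eq_erase]
  rfl

lemma notMem_of_mem_insert_empty (Q : Finpartition s) (ha : a ∉ s) {t : Finset α}
    (ht : t ∈ insert ∅ Q.parts) : a ∉ t := fun h => by
  rcases mem_insert.1 ht with rfl | ht
  exacts [notMem_empty a h, ha (Q.le ht h)]

lemma part_insertInto (Q : Finpartition s) (ha : a ∉ s) (t : Finset α)
    (ht : t ∈ insert ∅ Q.parts) : (Q.insertInto ha t ht).part a = insert a t :=
  part_eq_of_mem _ (mem_insert_self _ _) (mem_insert_self a t)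

lemma eraseElem_insertInto (Q : Finpartition s) (ha : a ∉ s) (t : Finset α)
    (ht : t ∈ insert ∅ Q.parts) : (Q.insertInto ha t ht).eraseElem ha = Q := by
  ext : 1
  rw [eraseElem_parts, insertInto_parts, image_insert,
    erase_insert (Q.notMem_of_mem_insert_empty ha ht),
    image_erase_eq_self fun p hp h => ha (Q.le (mem_of_mem_erase hp) h)]
  rcases mem_insert.1 ht with rfl | ht
  · rw [erase_insert_eq_erase, erase_idem, erase_eq_of_notMem Q.empty_notMem_parts]
  · rw [insert_erase ht, erase_eq_of_notMem Q.empty_notMem_parts]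

lemma erase_part_notMem_erase (P : Finpartition (insert a s)) :
    (P.part a).erase a ∉ P.parts.erase (P.part a) := by
  intro h
  obtain ⟨hne, hmem⟩ := mem_erase.1 h
  obtain ⟨b, hb⟩ := P.nonempty_of_mem_parts hmem
  exact disjoint_left.1 (P.disjoint hmem (P.part_mem.2 (mem_insert_self a s)) hne) hb
    (mem_of_mem_erase hb)

lemma erase_part_mem_insert_empty (P : Finpartition (insert a s)) (ha : a ∉ s) :
    (P.part a).erase a ∈ insert ∅ (P.eraseElem ha).parts := by
  rw [eraseElem_parts]
  exact insert_erase_subset _ _ (mem_image_of_mem _ (P.part_mem.2 (mem_insert_self a s)))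

lemma insertInto_eraseElem (P : Finpartition (insert a s)) (ha : a ∉ s) :
    (P.eraseElem ha).insertInto ha _ (P.erase_part_mem_insert_empty ha) = P := by
  have hpa := P.part_mem.2 (mem_insert_self a s)
  ext : 1
  have himage : P.parts.image (·.erase a) =
      insert ((P.part a).erase a) (P.parts.erase (P.part a)) := by
    conv_lhs => rw [← insert_erase hpa]
    rw [image_insert, image_erase_eq_self fun p hp h =>
      (mem_erase.1 hp).1 (P.part_eq_of_mem (mem_of_mem_erase hp) h).symm]
  rw [insertInto_parts, eraseElem_parts, himage, erase_right_comm,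
    erase_insert (erase_part_notMem_erase P),
    erase_eq_of_notMem fun h => P.empty_notMem_parts (mem_of_mem_erase h),
    insert_erase (P.mem_part_self.2 (mem_insert_self a s)), insert_erase hpa]

/-- A partition of `insert a s` is a partition of `s` together with the part that receives `a`,
where `t = ∅` stands for the new part `{a}`. -/
def insertEquiv (ha : a ∉ s) :
    (Σ Q : Finpartition s, ↥(insert ∅ Q.parts)) ≃ Finpartition (insert a s) where
  toFun x := x.1.insertInto ha x.2 x.2.2
  invFun P := ⟨P.eraseElem ha, _, P.erase_part_mem_insert_empty ha⟩
  left_inv := fun ⟨Q, t, ht⟩ => Sigma.subtype_ext (eraseElem_insertInto Q ha t ht)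
    (by dsimp only; rw [part_insertInto, erase_insert (Q.notMem_of_mem_insert_empty ha ht)])
  right_inv P := insertInto_eraseElem P ha

lemma card_parts_insert_eq_add_one (ha : a ∉ s) (j : ℕ) :
    Nat.card {P : Finpartition (insert a s) // #P.parts = j + 1} =
      (j + 1) * Nat.card {Q : Finpartition s // #Q.parts = j + 1} +
        Nat.card {Q : Finpartition s // #Q.parts = j} := by
  simp only [Nat.card_eq_fintype_card, Fintype.card_subtype, card_filter]
  rw [← (insertEquiv ha).sum_comp, Fintype.sum_sigma, mul_sum, ← sum_add_distrib]
  refine sum_congr rfl fun Q _ => ?_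
  simp only [insertEquiv, Equiv.coe_fn_mk, card_insertInto]
  rw [sum_coe_sort (insert ∅ Q.parts)
      (fun t => if #Q.parts + (if t = ∅ then 1 else 0) = j + 1 then 1 else 0),
    sum_insert Q.empty_notMem_parts,
    sum_congr rfl fun t ht => by rw [if_neg (Q.ne_empty ht)], sum_const, smul_eq_mul]
  simp only [↓reduceIte, add_zero, mul_ite, mul_one, mul_zero]
  split_ifs <;> omega

theorem card_parts_eq_stirling (s : Finset α) (j : ℕ) :
    Nat.card {P : Finpartition s // #P.parts = j} = stirling #s j := by
  induction s using Finset.induction_on generalizing j with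
  | empty =>
    have hparts (P : Finpartition (∅ : Finset α)) : P.parts = ∅ := parts_eq_empty_iff.2 rfl
    cases j with
    | zero =>
      exact Nat.card_eq_one_iff_unique.2
        ⟨⟨fun P Q => Subtype.ext (Finpartition.ext (by rw [hparts, hparts]))⟩,
          ⟨⟨⊥, by simp [hparts]⟩⟩⟩
    | succ j => exact Nat.card_eq_zero.2 (Or.inl ⟨fun P => by simpa [hparts] using P.2⟩)
  | insert a s ha ih =>
    rw [card_insert_of_notMem ha]
    cases j with
    | zero =>
      exact Nat.card_eq_zero.2 (Or.inl ⟨fun P =>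
        (insert_ne_empty a s) (parts_eq_empty_iff.1 (card_eq_zero.1 P.2))⟩)
    | succ j => rw [card_parts_insert_eq_add_one ha, ih, ih]; rfl

variable {t : Finset α}

def disjUnion (P : Finpartition s) (Q : Finpartition t) (h : Disjoint s t) :
    Finpartition (s ∪ t) where
  parts := P.parts ∪ Q.parts
  supIndep := by
    rw [supIndep_iff_pairwiseDisjoint, coe_union]
    exact P.disjoint.union Q.disjoint fun p hp q hq _ => h.mono (P.le hp) (Q.le hq)
  sup_parts := by rw [sup_union, P.sup_parts, Q.sup_parts]; rfl
  bot_notMem h := (mem_union.1 h).elim P.bot_notMem Q.bot_notMem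

lemma card_disjUnion (P : Finpartition s) (Q : Finpartition t) (h : Disjoint s t) :
    #(P.disjUnion Q h).parts = #P.parts + #Q.parts :=
  card_union_of_disjoint <| disjoint_left.2 fun _ hP hQ =>
    P.ne_empty hP (disjoint_self.1 (h.mono (P.le hP) (Q.le hQ)))

lemma mem_parts_of_parts_subset {P : Finpartition s} {Q : Finpartition t}
    (h : Q.parts ⊆ P.parts) {p : Finset α} (hp : p ∈ P.parts) {x : α} (hxp : x ∈ p)
    (hxt : x ∈ t) : p ∈ Q.parts := by
  obtain ⟨q, hq, hxq⟩ := Q.exists_mem hxt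
  rwa [P.eq_of_mem_parts hp (h hq) hxp hxq]

lemma eq_of_parts_subset {P Q : Finpartition s} (h : Q.parts ⊆ P.parts) : Q = P :=
  Finpartition.ext <| h.antisymm fun p hp => by
    obtain ⟨x, hx⟩ := P.nonempty_of_mem_parts hp
    exact mem_parts_of_parts_subset h hp hx (P.le hp hx)

lemma restrict_eq_of_parts_subset (P : Finpartition s) {Q : Finpartition t} (hts : t ⊆ s)
    (h : Q.parts ⊆ P.parts) : P.restrict hts = Q := by
  ext p
  simp only [restrict, mem_erase, mem_image, inf_eq_inter, bot_eq_empty]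
  constructor
  · rintro ⟨hne, q, hq, rfl⟩
    obtain ⟨x, hx⟩ := nonempty_iff_ne_empty.2 hne
    have hqQ := mem_parts_of_parts_subset h hq (mem_inter.1 hx).1 (mem_inter.1 hx).2
    rwa [inter_eq_left.2 (Q.le hqQ)]
  · intro hp
    exact ⟨Q.ne_empty hp, p, h hp, inter_eq_left.2 (Q.le hp)⟩

lemma restrict_parts_subset (P : Finpartition s) (hts : t ⊆ s)
    (h : ∀ p ∈ P.parts, ∀ x ∈ p, x ∈ t → p ⊆ t) :
    (P.restrict hts).parts ⊆ P.parts := by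
  intro q hq
  simp only [restrict, mem_erase, mem_image, inf_eq_inter, bot_eq_empty] at hq
  obtain ⟨hne, p, hp, rfl⟩ := hq
  obtain ⟨x, hx⟩ := nonempty_iff_ne_empty.2 hne
  rw [mem_inter] at hx
  rwa [inter_eq_left.2 (h p hp x hx.1 hx.2)]

end Finpartition

namespace BipartiteMinusMatching

open Sum

variable {n : ℕ}

@[simp] lemma adj_inl_inr {i j : Fin n} :
    (bipartiteMinusMatching n).Adj (inl i) (inr j) ↔ i ≠ j := by
  simp [bipartiteMinusMatching]

@[simp] lemma adj_inr_inl {i j : Fin n} :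
    (bipartiteMinusMatching n).Adj (inr i) (inl j) ↔ i ≠ j := by
  simp [bipartiteMinusMatching, eq_comm]

@[simp] lemma not_adj_inl_inl {i j : Fin n} :
    ¬ (bipartiteMinusMatching n).Adj (inl i) (inl j) := by
  simp [bipartiteMinusMatching]

@[simp] lemma not_adj_inr_inr {i j : Fin n} :
    ¬ (bipartiteMinusMatching n).Adj (inr i) (inr j) := by
  simp [bipartiteMinusMatching]

def pair (i : Fin n) : Finset (Fin n ⊕ Fin n) := {inl i, inr i}

lemma independent_iff {p : Finset (Fin n ⊕ Fin n)} :
    (∀ a ∈ p, ∀ b ∈ p, ¬ (bipartiteMinusMatching n).Adj a b) ↔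
      (∀ z ∈ p, z.isLeft) ∨ (∀ z ∈ p, z.isRight) ∨ ∃ i, p = pair i := by
  constructor
  · intro h
    by_contra! hp
    obtain ⟨⟨x, hx, hxl⟩, ⟨y, hy, hyr⟩, hpair⟩ := hp
    obtain ⟨j, rfl⟩ := isRight_iff.1 (not_isLeft.1 hxl)
    obtain ⟨i, rfl⟩ := isLeft_iff.1 (not_isRight.1 hyr)
    have hinl {i'} (h' : inl i' ∈ p) : i' = j :=
      not_not.1 fun hne => h _ h' _ hx (adj_inl_inr.2 hne)
    have hinr {j'} (h' : inr j' ∈ p) : i = j' :=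
      not_not.1 fun hne => h _ hy _ h' (adj_inl_inr.2 hne)
    obtain rfl := hinl hy
    refine hpair i (subset_antisymm (fun z hz => ?_) (by simp [pair, insert_subset_iff, hx, hy]))
    cases z with
    | inl i' => simp [pair, hinl hz]
    | inr j' => simp [pair, hinr hz]
  · rintro (h | h | ⟨i, rfl⟩) a ha b hb
    · obtain ⟨i, rfl⟩ := isLeft_iff.1 (h a ha)
      obtain ⟨j, rfl⟩ := isLeft_iff.1 (h b hb)
      exact not_adj_inl_inl
    · obtain ⟨i, rfl⟩ := isRight_iff.1 (h a ha)
      obtain ⟨j, rfl⟩ := isRight_iff.1 (h b hb)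
      exact not_adj_inr_inr
    · simp only [pair, mem_insert, mem_singleton] at ha hb
      rcases ha with rfl | rfl <;> rcases hb with rfl | rfl <;> simp

lemma pair_injective : Function.Injective (pair (n := n)) := fun i j h => by
  simpa [pair] using (h ▸ mem_insert_self (inl i) {inr i} : inl i ∈ pair j)

def IsProper (P : Finpartition (univ : Finset (Fin n ⊕ Fin n))) : Prop :=
  ∀ p ∈ P.parts, ∀ a ∈ p, ∀ b ∈ p, ¬ (bipartiteMinusMatching n).Adj a b

def unmatched (P : Finpartition (univ : Finset (Fin n ⊕ Fin n))) : Finset (Fin n) :=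
  {i | pair i ∉ P.parts}

def uSide (S : Finset (Fin n)) : Finset (Fin n ⊕ Fin n) := S.map .inl

def vSide (S : Finset (Fin n)) : Finset (Fin n ⊕ Fin n) := S.map .inr

variable {S : Finset (Fin n)} {i : Fin n}

@[simp] lemma inl_mem_uSide : inl i ∈ uSide S ↔ i ∈ S := by simp [uSide]
@[simp] lemma inr_notMem_uSide : inr i ∉ uSide S := by simp [uSide]
@[simp] lemma inr_mem_vSide : inr i ∈ vSide S ↔ i ∈ S := by simp [vSide]
@[simp] lemma inl_notMem_vSide : inl i ∉ vSide S := by simp [vSide]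

lemma isLeft_of_mem_uSide {z : Fin n ⊕ Fin n} (hz : z ∈ uSide S) : z.isLeft := by
  cases z <;> simp_all

lemma isRight_of_mem_vSide {z : Fin n ⊕ Fin n} (hz : z ∈ vSide S) : z.isRight := by
  cases z <;> simp_all

lemma card_uSide (S : Finset (Fin n)) : #(uSide S) = #S := card_map _
lemma card_vSide (S : Finset (Fin n)) : #(vSide S) = #S := card_map _

lemma disjoint_uSide_vSide (S T : Finset (Fin n)) : Disjoint (uSide S) (vSide T) :=
  disjoint_left.2 fun z hz => by cases z <;> simp_all

def pairing (T : Finset (Fin n)) : Finpartition (uSide T ∪ vSide T) where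
  parts := T.image pair
  supIndep := by
    rw [supIndep_iff_pairwiseDisjoint, coe_image]
    rintro _ ⟨i, -, rfl⟩ _ ⟨j, -, rfl⟩ hij
    have hij : i ≠ j := fun h => hij (h ▸ rfl)
    simp [Function.onFun, pair, hij.symm]
  sup_parts := by
    ext z
    cases z <;> simp [pair]
  bot_notMem := by simp [pair]

lemma card_pairing (T : Finset (Fin n)) : #(pairing T).parts = #T :=
  card_image_of_injective _ pair_injective

lemma disjoint_compl_sides (S : Finset (Fin n)) :
    Disjoint (uSide Sᶜ ∪ vSide Sᶜ) (uSide S ∪ vSide S) :=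
  disjoint_left.2 fun z hz => by cases z <;> simp_all

lemma compl_sides_union_sides (S : Finset (Fin n)) :
    uSide Sᶜ ∪ vSide Sᶜ ∪ (uSide S ∪ vSide S) = univ := by
  ext z
  cases z <;> simp [em']

def glue (S : Finset (Fin n)) (P₁ : Finpartition (uSide S)) (P₂ : Finpartition (vSide S)) :
    Finpartition (univ : Finset (Fin n ⊕ Fin n)) :=
  ((pairing Sᶜ).disjUnion (P₁.disjUnion P₂ (disjoint_uSide_vSide S S))
    (disjoint_compl_sides S)).copy (compl_sides_union_sides S)

section Glue

variable (S) (P₁ : Finpartition (uSide S)) (P₂ : Finpartition (vSide S))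

lemma glue_parts : (glue S P₁ P₂).parts = Sᶜ.image pair ∪ (P₁.parts ∪ P₂.parts) := rfl

lemma card_glue : #(glue S P₁ P₂).parts = (n - #S) + (#P₁.parts + #P₂.parts) := by
  rw [glue, Finpartition.copy_parts, Finpartition.card_disjUnion, Finpartition.card_disjUnion,
    card_pairing, card_compl, Fintype.card_fin]


lemma isProper_glue : IsProper (glue S P₁ P₂) := by
  intro p hp
  rw [glue_parts, mem_union, mem_union, mem_image] at hp
  refine independent_iff.2 ?_
  rcases hp with ⟨i, -, rfl⟩ | hp | hp
  · exact Or.inr (Or.inr ⟨i, rfl⟩)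
  · exact Or.inl fun z hz => isLeft_of_mem_uSide (P₁.le hp hz)
  · exact Or.inr (Or.inl fun z hz => isRight_of_mem_vSide (P₂.le hp hz))

lemma unmatched_glue : unmatched (glue S P₁ P₂) = S := by
  ext i
  have h₁ : pair i ∉ P₁.parts := fun h =>
    inr_notMem_uSide (P₁.le h (by simp [pair] : inr i ∈ pair i))
  have h₂ : pair i ∉ P₂.parts := fun h =>
    inl_notMem_vSide (P₂.le h (by simp [pair] : inl i ∈ pair i))
  simp [unmatched, glue_parts, pair_injective.mem_finset_image, h₁, h₂]

lemma restrict_glue_uSide : (glue S P₁ P₂).restrict (subset_univ _) = P₁ :=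
  Finpartition.restrict_eq_of_parts_subset _ _ (subset_union_left.trans subset_union_right)

lemma restrict_glue_vSide : (glue S P₁ P₂).restrict (subset_univ _) = P₂ :=
  Finpartition.restrict_eq_of_parts_subset _ _ (subset_union_right.trans subset_union_right)

end Glue

variable {P : Finpartition (univ : Finset (Fin n ⊕ Fin n))} {p : Finset (Fin n ⊕ Fin n)}

lemma pair_mem_parts_of_notMem_unmatched (hi : i ∉ unmatched P) : pair i ∈ P.parts := by
  simpa [unmatched] using hi

lemma subset_uSide_of_mem (hP : IsProper P) (hp : p ∈ P.parts) {z : Fin n ⊕ Fin n}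
    (hz : z ∈ p) (hzS : z ∈ uSide (unmatched P)) : p ⊆ uSide (unmatched P) := by
  obtain ⟨i, rfl⟩ := isLeft_iff.1 (isLeft_of_mem_uSide hzS)
  rcases independent_iff.1 (hP p hp) with hl | hr | ⟨j, rfl⟩
  · intro z hz
    obtain ⟨j, rfl⟩ := isLeft_iff.1 (hl z hz)
    refine inl_mem_uSide.2 (by_contra fun hj => ?_)
    have := P.eq_of_mem_parts hp (pair_mem_parts_of_notMem_unmatched hj) hz (by simp [pair])
    simpa using hl (inr j) (this ▸ by simp [pair])
  · simpa using hr _ hz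
  · obtain rfl : i = j := by simpa [pair] using hz
    exact absurd hp (by simpa [unmatched] using hzS)

lemma subset_vSide_of_mem (hP : IsProper P) (hp : p ∈ P.parts) {z : Fin n ⊕ Fin n}
    (hz : z ∈ p) (hzS : z ∈ vSide (unmatched P)) : p ⊆ vSide (unmatched P) := by
  obtain ⟨i, rfl⟩ := isRight_iff.1 (isRight_of_mem_vSide hzS)
  rcases independent_iff.1 (hP p hp) with hl | hr | ⟨j, rfl⟩
  · simpa using hl _ hz
  · intro z hz
    obtain ⟨j, rfl⟩ := isRight_iff.1 (hr z hz)
    refine inr_mem_vSide.2 (by_contra fun hj => ?_)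
    have := P.eq_of_mem_parts hp (pair_mem_parts_of_notMem_unmatched hj) hz (by simp [pair])
    simpa using hr (inl j) (this ▸ by simp [pair])
  · obtain rfl : i = j := by simpa [pair] using hz
    exact absurd hp (by simpa [unmatched] using hzS)

lemma glue_unmatched_restrict (hP : IsProper P) :
    glue (unmatched P) (P.restrict (subset_univ _)) (P.restrict (subset_univ _)) = P := by
  refine Finpartition.eq_of_parts_subset ?_
  rw [glue_parts]
  refine union_subset (image_subset_iff.2 fun i hi => ?_) (union_subset ?_ ?_)
  · exact pair_mem_parts_of_notMem_unmatched (mem_compl.1 hi)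
  · exact P.restrict_parts_subset _ fun p hp z hz hzS => subset_uSide_of_mem hP hp hz hzS
  · exact P.restrict_parts_subset _ fun p hp z hz hzS => subset_vSide_of_mem hP hp hz hzS

def unmatchedFiberEquiv (S : Finset (Fin n)) :
    {P // IsProper P ∧ unmatched P = S} ≃ Finpartition (uSide S) × Finpartition (vSide S) where
  toFun P := (P.1.restrict (subset_univ _), P.1.restrict (subset_univ _))
  invFun x := ⟨glue S x.1 x.2, isProper_glue S x.1 x.2, unmatched_glue S x.1 x.2⟩
  left_inv := fun ⟨P, hP, hS⟩ => Subtype.ext (by subst hS; exact glue_unmatched_restrict hP)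
  right_inv x := Prod.ext (restrict_glue_uSide S x.1 x.2) (restrict_glue_vSide S x.1 x.2)

lemma card_parts_eq_of_unmatched_eq (hP : IsProper P) (hS : unmatched P = S) :
    #P.parts = (n - #S) + (#(P.restrict (subset_univ (uSide S))).parts +
      #(P.restrict (subset_univ (vSide S))).parts) := by
  subst hS
  conv_lhs => rw [← glue_unmatched_restrict hP]
  exact card_glue ..

lemma card_fiber_unmatched (S : Finset (Fin n)) (k : ℕ) :
    Nat.card {P // (IsProper P ∧ #P.parts = k) ∧ unmatched P = S} =
      if n ≤ k + #S then
        ∑ j ∈ range (k + #S - n + 1), stirling #S j * stirling #S (k + #S - n - j)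
      else 0 := by
  have e : {P // (IsProper P ∧ #P.parts = k) ∧ unmatched P = S} ≃
      {x : Finpartition (uSide S) × Finpartition (vSide S) //
        (n - #S) + (#x.1.parts + #x.2.parts) = k} :=
    ((Equiv.subtypeEquivRight fun _ => and_right_comm).trans
      (Equiv.subtypeSubtypeEquivSubtypeInter _ _).symm).trans
      ((unmatchedFiberEquiv S).subtypeEquiv fun P => by
        rw [card_parts_eq_of_unmatched_eq P.2.1 P.2.2]; rfl)
  have hS : #S ≤ n := (card_le_univ S).trans_eq (Fintype.card_fin n)
  rw [Nat.card_congr e]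
  split_ifs with h
  · rw [Nat.card_congr (Equiv.subtypeEquivRight fun x => by omega :
        _ ≃ {x : Finpartition (uSide S) × Finpartition (vSide S) //
          #x.1.parts + #x.2.parts = k + #S - n}),
      Nat.card_subtype_prod_add_eq (fun P : Finpartition (uSide S) => #P.parts)
        (fun P : Finpartition (vSide S) => #P.parts), Nat.sum_antidiagonal_eq_sum_range_succ
        fun i j => Nat.card {x : Finpartition (uSide S) // #x.parts = i} *
          Nat.card {y : Finpartition (vSide S) // #y.parts = j}]
    simp only [Finpartition.card_parts_eq_stirling, card_uSide, card_vSide]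
  · exact Nat.card_eq_zero.2 (Or.inl ⟨fun x => h (by omega)⟩)

end BipartiteMinusMatching

open BipartiteMinusMatching

/-- The number of proper partitions of `H = K_{n,n} − M` into exactly `k` independent sets
equals `∑_{s=0}^{n} C(n,s) ∑_j S(s,j)·S(s, k−n+s−j)`, the inner sum being `0` when
`k − n + s < 0`. -/
theorem stirling_bipartiteMinusMatching (n k : ℕ) :
    Nat.card {P : Finpartition (Finset.univ : Finset (Fin n ⊕ Fin n)) //
        (∀ p ∈ P.parts, ∀ a ∈ p, ∀ b ∈ p, ¬ (bipartiteMinusMatching n).Adj a b) ∧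
        P.parts.card = k} =
      ∑ s ∈ Finset.range (n + 1), n.choose s *
        (if n ≤ k + s then
          ∑ j ∈ Finset.range (k + s - n + 1), stirling s j * stirling s (k + s - n - j)
        else 0) := by
  classical
  let F (s : ℕ) := if n ≤ k + s then
    ∑ j ∈ range (k + s - n + 1), stirling s j * stirling s (k + s - n - j) else 0
  calc Nat.card {P // IsProper P ∧ #P.parts = k}
      = ∑ S : Finset (Fin n),
          Nat.card {P // (IsProper P ∧ #P.parts = k) ∧ unmatched P = S} := by
        simp only [Nat.card_eq_fintype_card, Fintype.card_subtype, ← filter_filter]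
        exact card_eq_sum_card_fiberwise fun _ _ => mem_univ _
    _ = ∑ S : Finset (Fin n), F #S := by simp only [card_fiber_unmatched, F]
    _ = ∑ s ∈ range (n + 1), n.choose s * F s := by
        rw [← powerset_univ, sum_powerset_apply_card, card_univ, Fintype.card_fin]
        simp only [smul_eq_mul]
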